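/- Let μ > 0 and define the dispersion function ω(ξ) = sqrt(|ξ| * tanh(sqrt(μ)*|ξ|)) for ξ ∈ ℝ^d. Then for all ξ₁, ξ₂ ∈ ℝ^d with ξ₁ ≠ 0, ξ₂ ≠ 0, and ξ₁ + ξ₂ ≠ 0, one has ω(ξ₁ + ξ₂) < ω(ξ₁) + ω(ξ₂). -/

import Mathlib

/-!
The radial profile `r ↦ √(r tanh(c r))` is nondecreasing, so by the triangle inequality it
suffices to prove its strict subadditivity on `(0, ∞)`. That follows from the strict decrease of
`√(r tanh(c r)) / r = √(tanh(c r) / r)`, i.e. of `tanh s / s`, whose derivative has the sign of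
`s - sinh s cosh s < 0`.
-/

open Real Set

namespace Real

theorem strictMono_tanh : StrictMono tanh := fun x y h => by
  have hmem : ∀ z, tanh z ∈ Ioo (-1) 1 := fun z => ⟨neg_one_lt_tanh z, tanh_lt_one z⟩
  rwa [← strictMonoOn_artanh.lt_iff_lt (hmem x) (hmem y), artanh_tanh, artanh_tanh]

theorem tanh_nonneg {x : ℝ} (hx : 0 ≤ x) : 0 ≤ tanh x :=
  tanh_zero ▸ strictMono_tanh.monotone hx

theorem hasDerivAt_tanh (x : ℝ) : HasDerivAt tanh (1 / cosh x ^ 2) x := by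
  rw [show tanh = sinh / cosh from funext tanh_eq_sinh_div_cosh]
  refine ((hasDerivAt_sinh x).div (hasDerivAt_cosh x) (cosh_pos x).ne').congr_deriv ?_
  rw [← cosh_sq_sub_sinh_sq x]
  ring

theorem continuous_tanh : Continuous tanh :=
  continuous_iff_continuousAt.2 fun x => (hasDerivAt_tanh x).continuousAt

theorem strictAntiOn_tanh_div_self : StrictAntiOn (fun x => tanh x / x) (Ioi 0) := by
  refine strictAntiOn_of_deriv_neg (convex_Ioi 0)
    (continuous_tanh.continuousOn.div continuousOn_id fun x hx => (mem_Ioi.1 hx).ne') ?_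
  intro x hx
  rw [interior_Ioi, mem_Ioi] at hx
  have hderiv : HasDerivAt (fun y => tanh y / y) _ x :=
    (hasDerivAt_tanh x).div (hasDerivAt_id' x) hx.ne'
  rw [hderiv.deriv]
  refine div_neg_of_neg_of_pos ?_ (by positivity)
  have hcosh := cosh_pos x
  have hx_lt_sinh : x < sinh x := self_lt_sinh_iff.2 hx
  have hsinh_le : sinh x ≤ sinh x * cosh x :=
    le_mul_of_one_le_right (sinh_pos_iff.2 hx).le (one_le_cosh x)
  rw [tanh_eq_sinh_div_cosh, mul_one, sub_neg, one_div, inv_mul_eq_div,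
    div_lt_div_iff₀ (by positivity) hcosh]
  nlinarith

end Real

theorem map_add_lt_add_of_strictAntiOn_div {f : ℝ → ℝ}
    (hf : StrictAntiOn (fun x => f x / x) (Ioi 0)) {a b : ℝ} (ha : 0 < a) (hb : 0 < b) :
    f (a + b) < f a + f b := by
  have hab : 0 < a + b := add_pos ha hb
  have hlt_a : f (a + b) / (a + b) < f a / a := hf ha hab (lt_add_of_pos_right a hb)
  have hlt_b : f (a + b) / (a + b) < f b / b := hf hb hab (lt_add_of_pos_left b ha)
  calc f (a + b) = a * (f (a + b) / (a + b)) + b * (f (a + b) / (a + b)) := by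
        field_simp
    _ < a * (f a / a) + b * (f b / b) := by gcongr
    _ = f a + f b := by field_simp

/-- The finite-depth dispersion relation as a function of `r = |ξ|`, with `c = √μ`. -/
noncomputable def dispersion (c r : ℝ) : ℝ := √(r * tanh (c * r))

theorem dispersion_monotoneOn {c : ℝ} (hc : 0 ≤ c) : MonotoneOn (dispersion c) (Ici 0) :=
  fun _ hr _ _ hrs => sqrt_le_sqrt <| mul_le_mul hrs
    (strictMono_tanh.monotone (mul_le_mul_of_nonneg_left hrs hc))
    (tanh_nonneg (mul_nonneg hc hr)) (hr.trans hrs)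

theorem dispersion_div_self (c : ℝ) {r : ℝ} (hr : 0 < r) :
    dispersion c r / r = √(tanh (c * r) / r) := by
  rw [dispersion, ← sqrt_sq hr.le, ← sqrt_div' _ (sq_nonneg r), sqrt_sq hr.le]
  congr 1
  field_simp

theorem strictAntiOn_dispersion_div {c : ℝ} (hc : 0 < c) :
    StrictAntiOn (fun r => dispersion c r / r) (Ioi 0) := by
  intro r (hr : 0 < r) s (hs : 0 < s) hrs
  simp only [dispersion_div_self c hr, dispersion_div_self c hs]
  refine sqrt_lt_sqrt (div_nonneg (tanh_nonneg (by positivity)) hs.le) ?_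
  have hscaled : tanh (c * s) / (c * s) < tanh (c * r) / (c * r) :=
    strictAntiOn_tanh_div_self (mul_pos hc hr) (mul_pos hc hs) (mul_lt_mul_of_pos_left hrs hc)
  rwa [mul_comm c s, mul_comm c r, ← div_div, ← div_div, div_lt_div_iff_of_pos_right hc,
    mul_comm s, mul_comm r] at hscaled

theorem stmt3_general (d : ℕ) (μ : ℝ) (hμ : 0 < μ)
    (ω : EuclideanSpace ℝ (Fin d) → ℝ)
    (hω : ∀ ξ, ω ξ = Real.sqrt (‖ξ‖ * Real.tanh (Real.sqrt μ * ‖ξ‖)))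
    (ξ₁ ξ₂ : EuclideanSpace ℝ (Fin d)) (h₁ : ξ₁ ≠ 0) (h₂ : ξ₂ ≠ 0) :
    ω (ξ₁ + ξ₂) < ω ξ₁ + ω ξ₂ := by
  have hω' : ∀ ξ, ω ξ = dispersion (√μ) ‖ξ‖ := hω
  rw [hω', hω', hω']
  calc dispersion (√μ) ‖ξ₁ + ξ₂‖ ≤ dispersion (√μ) (‖ξ₁‖ + ‖ξ₂‖) :=
        dispersion_monotoneOn (sqrt_nonneg μ) (norm_nonneg _)
          (add_nonneg (norm_nonneg _) (norm_nonneg _)) (norm_add_le _ _)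
    _ < dispersion (√μ) ‖ξ₁‖ + dispersion (√μ) ‖ξ₂‖ :=
        map_add_lt_add_of_strictAntiOn_div (strictAntiOn_dispersion_div (sqrt_pos.2 hμ))
          (norm_pos_iff.2 h₁) (norm_pos_iff.2 h₂)

/-- Strict subadditivity of the finite-depth gravity water-wave dispersion function
`ω(ξ) = √(|ξ| tanh(√μ |ξ|))` on `ℝ^d`. -/
theorem stmt3 (d : ℕ) (hd : 1 ≤ d) (μ : ℝ) (hμ : 0 < μ)
    (ω : EuclideanSpace ℝ (Fin d) → ℝ)
    (hω : ∀ ξ, ω ξ = Real.sqrt (‖ξ‖ * Real.tanh (Real.sqrt μ * ‖ξ‖)))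
    (ξ₁ ξ₂ : EuclideanSpace ℝ (Fin d)) (h₁ : ξ₁ ≠ 0) (h₂ : ξ₂ ≠ 0)
    (h₁₂ : ξ₁ + ξ₂ ≠ 0) :
    ω (ξ₁ + ξ₂) < ω ξ₁ + ω ξ₂ :=
  stmt3_general d μ hμ ω hω ξ₁ ξ₂ h₁ h₂
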